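/- arXiv:1508.07929 — 4 statements merged into one kernel-verified Lean document; each statement's English description precedes it below -/
import Mathlib

section
/- For all real numbers x₀ and u, the logistic log-partition function g(x) = log(1+eˣ) satisfies g''(x₀)(e^{-|u|} + |u| - 1) ≤ g(x₀+u) - g(x₀) - g'(x₀)u ≤ g''(x₀)(e^{|u|} - |u| - 1). -/
/-!
Write `g x = log (1 + exp x)`, `a = g'' x₀` and `D t = g (x₀ + t) - g x₀ - g' x₀ * t`, so that
`D 0 = D' 0 = 0` and `D'' t = g'' (x₀ + t)`. Self-concordance `|g'''| ≤ g''` says that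
`log g'' x = x - 2 log (1 + exp x)` is 1-Lipschitz, hence `a e^{-|t|} ≤ D'' t ≤ a e^{|t|}`.
Integrating twice from `0`, i.e. comparing `D` with the functions `a (e^{±|t|} ∓ |t| - 1)`, which
have the same value and slope at `0` and second derivative `a e^{±|t|}`, gives both bounds.
-/

open Real Set

section Comparison

variable {f f' f'' g g' g'' : ℝ → ℝ}

theorem image_le_of_hasDerivAt_le {a b : ℝ} (hf : ∀ t, HasDerivAt f (f' t) t)
    (hg : ∀ t, HasDerivAt g (g' t) t) (ha : f a ≤ g a) (h : ∀ t ∈ Ico a b, f' t ≤ g' t) :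
    ∀ t ∈ Icc a b, f t ≤ g t :=
  image_le_of_deriv_right_le_deriv_boundary (fun t _ => (hf t).continuousAt.continuousWithinAt)
    (fun t _ => (hf t).hasDerivWithinAt) ha (fun t _ => (hg t).continuousAt.continuousWithinAt)
    (fun t _ => (hg t).hasDerivWithinAt) h

theorem HasDerivAt.comp_neg {φ : ℝ → ℝ} {φ' x : ℝ} (hφ : HasDerivAt φ φ' (-x)) :
    HasDerivAt (fun t => φ (-t)) (-φ') x := by
  simpa [Function.comp_def] using hφ.comp x (hasDerivAt_neg x)

variable (hf : ∀ t, HasDerivAt f (f' t) t) (hf' : ∀ t, HasDerivAt f' (f'' t) t)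
  (hg : ∀ t, HasDerivAt g (g' t) t) (hg' : ∀ t, HasDerivAt g' (g'' t) t)
include hf hf' hg hg'

theorem le_of_deriv2_le_of_nonneg (h0 : f 0 ≤ g 0) (h0' : f' 0 ≤ g' 0) {u : ℝ} (hu : 0 ≤ u)
    (h : ∀ t ∈ Icc 0 u, f'' t ≤ g'' t) : f u ≤ g u := by
  have hd := image_le_of_hasDerivAt_le hf' hg' h0' fun t ht => h t (Ico_subset_Icc_self ht)
  exact image_le_of_hasDerivAt_le hf hg h0 (fun t ht => hd t (Ico_subset_Icc_self ht)) u
    ⟨hu, le_rfl⟩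

theorem le_of_deriv2_le (h0 : f 0 ≤ g 0) (h0' : f' 0 = g' 0) {u : ℝ}
    (h : ∀ t ∈ uIcc 0 u, f'' t ≤ g'' t) : f u ≤ g u := by
  rcases le_total 0 u with hu | hu
  · exact le_of_deriv2_le_of_nonneg hf hf' hg hg' h0 h0'.le hu
      fun t ht => h t (Icc_subset_uIcc ht)
  have reflect : ∀ {φ φ' : ℝ → ℝ}, (∀ t, HasDerivAt φ (φ' t) t) →
      ∀ t, HasDerivAt (fun t => -φ (-t)) (φ' (-t)) t := fun hφ t => by
    simpa using (hφ (-t)).comp_neg.fun_neg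
  simpa using le_of_deriv2_le_of_nonneg (fun t => (hf (-t)).comp_neg) (reflect hf')
    (fun t => (hg (-t)).comp_neg) (reflect hg')
    (by simpa using h0) (by simp [h0']) (neg_nonneg.2 hu)
    fun t ht => h (-t) (Icc_subset_uIcc' ⟨by linarith [ht.2], by linarith [ht.1]⟩)

end Comparison

section ExpEnvelope

variable {f f' f'' : ℝ → ℝ} {a s u : ℝ}

theorem hasDerivAt_exp_mul_sub_mul_sub_one (s t : ℝ) :
    HasDerivAt (fun t => exp (s * t) - s * t - 1) (s * exp (s * t) - s) t :=
  (((hasDerivAt_id' t).const_mul s).exp.fun_sub ((hasDerivAt_id' t).const_mul s)).sub_const 1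
    |>.congr_deriv (by ring)

theorem hasDerivAt_mul_exp_mul_sub (s t : ℝ) :
    HasDerivAt (fun t => s * exp (s * t) - s) (s * s * exp (s * t)) t :=
  (((hasDerivAt_id' t).const_mul s).exp.const_mul s).sub_const s |>.congr_deriv (by ring)

variable (hs : s * s = 1) (hf : ∀ t, HasDerivAt f (f' t) t) (hf' : ∀ t, HasDerivAt f' (f'' t) t)
  (h0 : f 0 = 0) (h0' : f' 0 = 0)
include hs hf hf' h0 h0'

theorem le_mul_exp_mul_sub_of_deriv2_le (h : ∀ t ∈ uIcc 0 u, f'' t ≤ a * exp (s * t)) :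
    f u ≤ a * (exp (s * u) - s * u - 1) :=
  le_of_deriv2_le hf hf' (fun t => (hasDerivAt_exp_mul_sub_mul_sub_one s t).const_mul a)
    (fun t => (hasDerivAt_mul_exp_mul_sub s t).const_mul a) (by simp [h0]) (by simp [h0'])
    fun t ht => by simpa [hs] using h t ht

theorem mul_exp_mul_sub_le_of_le_deriv2 (h : ∀ t ∈ uIcc 0 u, a * exp (s * t) ≤ f'' t) :
    a * (exp (s * u) - s * u - 1) ≤ f u :=
  le_of_deriv2_le (fun t => (hasDerivAt_exp_mul_sub_mul_sub_one s t).const_mul a)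
    (fun t => (hasDerivAt_mul_exp_mul_sub s t).const_mul a) hf hf' (by simp [h0]) (by simp [h0'])
    fun t ht => by simpa [hs] using h t ht

end ExpEnvelope

theorem hasDerivAt_log_one_add_exp (x : ℝ) :
    HasDerivAt (fun x => log (1 + exp x)) (exp x / (1 + exp x)) x := by
  simpa using ((hasDerivAt_exp x).const_add 1).log (by positivity)

theorem hasDerivAt_exp_div_one_add_exp (x : ℝ) :
    HasDerivAt (fun x => exp x / (1 + exp x)) (exp x / (1 + exp x) ^ 2) x :=
  ((hasDerivAt_exp x).fun_div ((hasDerivAt_exp x).const_add 1) (by positivity)).congr_deriv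
    (by ring)

theorem exp_sub_two_mul_log_one_add_exp (x : ℝ) :
    exp (x - 2 * log (1 + exp x)) = exp x / (1 + exp x) ^ 2 := by
  rw [exp_sub, two_mul, exp_add, exp_log (by positivity), sq]

theorem lipschitzWith_sub_two_mul_log_one_add_exp :
    LipschitzWith 1 (fun x => x - 2 * log (1 + exp x)) := by
  have hd x : HasDerivAt (fun x => x - 2 * log (1 + exp x))
      (1 - 2 * (exp x / (1 + exp x))) x :=
    (hasDerivAt_id x).sub ((hasDerivAt_log_one_add_exp x).const_mul 2)
  refine lipschitzWith_of_nnnorm_deriv_le (fun x => (hd x).differentiableAt) fun x => ?_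
  rw [(hd x).deriv, ← NNReal.coe_le_coe, coe_nnnorm, Real.norm_eq_abs, NNReal.coe_one,
    abs_le]
  have hσ₀ : 0 ≤ exp x / (1 + exp x) := by positivity
  have hσ₁ : exp x / (1 + exp x) ≤ 1 := (div_le_one (by positivity)).2 (by linarith)
  constructor <;> linarith

theorem exp_div_one_add_exp_sq_add_mem_Icc (x t : ℝ) :
    exp (x + t) / (1 + exp (x + t)) ^ 2 ∈
      Icc (exp x / (1 + exp x) ^ 2 * exp (-|t|)) (exp x / (1 + exp x) ^ 2 * exp |t|) := by
  have hL := lipschitzWith_sub_two_mul_log_one_add_exp.dist_le_mul (x + t) x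
  simp only [NNReal.coe_one, one_mul, Real.dist_eq, add_sub_cancel_left] at hL
  simp only [mem_Icc, ← exp_sub_two_mul_log_one_add_exp, ← exp_add, exp_le_exp]
  constructor <;> linarith [abs_sub_le_iff.1 hL]

/-- Self-concordance property of the logistic log-partition function
`g(x) = log(1 + exp x)` (Bach 2010, Lemma 1), with
`g'(x) = exp x / (1 + exp x)` and `g''(x) = exp x / (1 + exp x)^2`. -/
theorem logistic_self_concordant (x₀ u : ℝ) :
    Real.exp x₀ / (1 + Real.exp x₀) ^ 2 * (Real.exp (-|u|) + |u| - 1)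
      ≤ Real.log (1 + Real.exp (x₀ + u)) - Real.log (1 + Real.exp x₀)
          - Real.exp x₀ / (1 + Real.exp x₀) * u
    ∧ Real.log (1 + Real.exp (x₀ + u)) - Real.log (1 + Real.exp x₀)
          - Real.exp x₀ / (1 + Real.exp x₀) * u
      ≤ Real.exp x₀ / (1 + Real.exp x₀) ^ 2 * (Real.exp |u| - |u| - 1) := by
  -- `exp |t|` is not differentiable at `0`, but on `[0, u]` it is `exp (s * t)` for `s = ±1`.
  obtain ⟨s, hss, hs⟩ : ∃ s : ℝ, s * s = 1 ∧ ∀ t ∈ uIcc 0 u, s * t = |t| := by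
    rcases le_total 0 u with hu | hu
    · exact ⟨1, one_mul 1, fun t ht => by rw [uIcc_of_le hu] at ht; simp [abs_of_nonneg ht.1]⟩
    · exact ⟨-1, by norm_num, fun t ht => by rw [uIcc_of_ge hu] at ht; simp [abs_of_nonpos ht.2]⟩
  have hD t : HasDerivAt
      (fun t => log (1 + exp (x₀ + t)) - log (1 + exp x₀) - exp x₀ / (1 + exp x₀) * t)
      (exp (x₀ + t) / (1 + exp (x₀ + t)) - exp x₀ / (1 + exp x₀)) t := by
    simpa using (((hasDerivAt_log_one_add_exp (x₀ + t)).comp_const_add x₀ t).sub_const _).fun_sub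
      ((hasDerivAt_id' t).const_mul (exp x₀ / (1 + exp x₀)))
  have hD' t : HasDerivAt (fun t => exp (x₀ + t) / (1 + exp (x₀ + t)) - exp x₀ / (1 + exp x₀))
      (exp (x₀ + t) / (1 + exp (x₀ + t)) ^ 2) t :=
    ((hasDerivAt_exp_div_one_add_exp (x₀ + t)).comp_const_add x₀ t).sub_const _
  have hu := hs u right_mem_uIcc
  constructor
  · have := mul_exp_mul_sub_le_of_le_deriv2 (a := exp x₀ / (1 + exp x₀) ^ 2) (s := -s)
      (by rwa [neg_mul_neg]) hD hD' (by simp) (by simp)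
      fun t ht => by rw [neg_mul s t, hs t ht]; exact (exp_div_one_add_exp_sq_add_mem_Icc x₀ t).1
    rwa [neg_mul s u, hu, sub_neg_eq_add] at this
  · have := le_mul_exp_mul_sub_of_deriv2_le hss hD hD' (by simp) (by simp)
      fun t ht => by rw [hs t ht]; exact (exp_div_one_add_exp_sq_add_mem_Icc x₀ t).2
    rwa [hu] at this
end

section
/- For every z ≥ 0, the Mills ratio satisfies z/(1+z²) ≤ 2/(z+√(z²+4)) ≤ (1-Φ(z))/φ(z) ≤ 4/(3z+√(z²+8)). -/
/-!
If `R` is differentiable on `[z, ∞)` and `R φ → 0` at infinity, then `-R φ` has derivative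
`φ(t) (t R(t) - R'(t))`, so `R(z) φ(z) = ∫_z^∞ φ(t) (t R(t) - R'(t)) dt`. Hence `R(z) φ(z)` is a
lower bound for the Gaussian tail when `0 ≤ t R - R' ≤ 1` on `(z, ∞)`, and an upper bound when
`t R - R' ≥ 1`. For `R = 2 / (t + √(t² + 4))` and `R = 4 / (3t + √(t² + 8))` these pointwise
conditions reduce, after squaring, to polynomial identities that differ by the constants `4` and
`32` respectively.
-/

open Real MeasureTheory Set Filter Topology ProbabilityTheory
open scoped NNReal

lemma hasDerivAt_gaussianPDFReal (μ : ℝ) (v : ℝ≥0) (x : ℝ) :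
    HasDerivAt (gaussianPDFReal μ v) (-(x - μ) / v * gaussianPDFReal μ v x) x := by
  have hexp : HasDerivAt (fun y => -(y - μ) ^ 2 / (2 * v)) (-(x - μ) / v) x := by
    refine ((((hasDerivAt_id x).sub_const μ).fun_pow 2).neg.div_const _).congr_deriv ?_
    rcases eq_or_ne (v : ℝ) 0 with hv | hv
    · simp [hv]
    · field_simp; simp
  refine (hexp.exp.const_mul (√(2 * π * v))⁻¹).congr_deriv ?_
  simp only [gaussianPDFReal]; ring

lemma tendsto_gaussianPDFReal_atTop (μ : ℝ) (v : ℝ≥0) :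
    Tendsto (gaussianPDFReal μ v) atTop (𝓝 0) := by
  rcases eq_or_ne v 0 with rfl | hv
  · rw [gaussianPDFReal_zero_var]; exact tendsto_const_nhds
  have hexp : Tendsto (fun x => -(x - μ) ^ 2 / (2 * (v:ℝ))) atTop atBot := by
    apply Tendsto.atBot_div_const (by positivity)
    exact tendsto_neg_atTop_atBot.comp
      ((tendsto_pow_atTop two_ne_zero).comp (tendsto_atTop_add_const_right _ _ tendsto_id))
  rw [gaussianPDFReal_def]
  exact mul_zero (√(2 * π * v))⁻¹ ▸ (tendsto_exp_atBot.comp hexp).const_mul (√(2 * π * v))⁻¹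

lemma integral_Ioi_gaussianPDFReal (μ : ℝ) {v : ℝ≥0} (hv : v ≠ 0) (z : ℝ) :
    ∫ t in Ioi z, gaussianPDFReal μ v t = 1 - ∫ t in Iic z, gaussianPDFReal μ v t := by
  have h := intervalIntegral.integral_Iic_add_Ioi (b := z)
    (integrable_gaussianPDFReal μ v).integrableOn (integrable_gaussianPDFReal μ v).integrableOn
  rw [integral_gaussianPDFReal_eq_one μ hv] at h
  linarith

section TailComparison

variable {R R' : ℝ → ℝ} {z l : ℝ}

lemma hasDerivAt_neg_mul_gaussianPDFReal {t : ℝ} (hR : HasDerivAt R (R' t) t) :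
    HasDerivAt (fun u => -(R u * gaussianPDFReal 0 1 u))
      (gaussianPDFReal 0 1 t * (t * R t - R' t)) t := by
  refine (hR.mul (hasDerivAt_gaussianPDFReal 0 1 t)).neg.congr_deriv ?_
  simp only [sub_zero, NNReal.coe_one, div_one]
  ring

theorem integrableOn_Ioi_gaussianPDFReal_mul_and_integral_eq
    (hR : ∀ t ∈ Ici z, HasDerivAt R (R' t) t) (hnonneg : ∀ t ∈ Ioi z, 0 ≤ t * R t - R' t)
    (hlim : Tendsto R atTop (𝓝 l)) :
    IntegrableOn (fun t => gaussianPDFReal 0 1 t * (t * R t - R' t)) (Ioi z) ∧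
      ∫ t in Ioi z, gaussianPDFReal 0 1 t * (t * R t - R' t) = R z * gaussianPDFReal 0 1 z := by
  have hderiv t (ht : t ∈ Ici z) := hasDerivAt_neg_mul_gaussianPDFReal (hR t ht)
  have hpos t (ht : t ∈ Ioi z) := mul_nonneg (gaussianPDFReal_nonneg 0 1 t) (hnonneg t ht)
  have hG : Tendsto (fun u => -(R u * gaussianPDFReal 0 1 u)) atTop (𝓝 0) := by
    simpa using (hlim.mul (tendsto_gaussianPDFReal_atTop 0 1)).neg
  refine ⟨integrableOn_Ioi_deriv_of_nonneg' hderiv hpos hG, ?_⟩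
  rw [integral_Ioi_of_hasDerivAt_of_nonneg' hderiv hpos hG]
  ring

theorem mul_gaussianPDFReal_le_integral_Ioi
    (hR : ∀ t ∈ Ici z, HasDerivAt R (R' t) t) (hnonneg : ∀ t ∈ Ioi z, 0 ≤ t * R t - R' t)
    (hle : ∀ t ∈ Ioi z, t * R t - R' t ≤ 1) (hlim : Tendsto R atTop (𝓝 l)) :
    R z * gaussianPDFReal 0 1 z ≤ ∫ t in Ioi z, gaussianPDFReal 0 1 t := by
  obtain ⟨hint, heq⟩ := integrableOn_Ioi_gaussianPDFReal_mul_and_integral_eq hR hnonneg hlim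
  rw [← heq]
  refine setIntegral_mono_on hint (integrable_gaussianPDFReal 0 1).integrableOn
    measurableSet_Ioi fun t ht => ?_
  exact mul_le_of_le_one_right (gaussianPDFReal_nonneg 0 1 t) (hle t ht)

theorem integral_Ioi_gaussianPDFReal_le_mul
    (hR : ∀ t ∈ Ici z, HasDerivAt R (R' t) t) (hge : ∀ t ∈ Ioi z, 1 ≤ t * R t - R' t)
    (hlim : Tendsto R atTop (𝓝 l)) :
    ∫ t in Ioi z, gaussianPDFReal 0 1 t ≤ R z * gaussianPDFReal 0 1 z := by
  obtain ⟨hint, heq⟩ := integrableOn_Ioi_gaussianPDFReal_mul_and_integral_eq hR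
    (fun t ht => zero_le_one.trans (hge t ht)) hlim
  rw [← heq]
  refine setIntegral_mono_on (integrable_gaussianPDFReal 0 1).integrableOn hint
    measurableSet_Ioi fun t ht => ?_
  exact le_mul_of_one_le_right (gaussianPDFReal_nonneg 0 1 t) (hge t ht)

end TailComparison

/-- Birnbaum's lower bound on the Mills ratio is `radicalBound 2 1 4`, Sampford's upper bound
`radicalBound 4 3 8`. -/
noncomputable def radicalBound (c a b t : ℝ) : ℝ := c / (a * t + √(t ^ 2 + b))

section RadicalBound

variable {a b : ℝ}

lemma add_sqrt_sq_add_pos (ha : 0 ≤ a) (hb : 0 < b) {t : ℝ} (ht : 0 ≤ t) :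
    0 < a * t + √(t ^ 2 + b) := by
  have := sqrt_pos.2 (show 0 < t ^ 2 + b by positivity)
  positivity

lemma hasDerivAt_radicalBound (c : ℝ) (hb : 0 < b) {t : ℝ} (ht : a * t + √(t ^ 2 + b) ≠ 0) :
    HasDerivAt (radicalBound c a b)
      (-(c * (a * √(t ^ 2 + b) + t)) / (√(t ^ 2 + b) * (a * t + √(t ^ 2 + b)) ^ 2)) t := by
  have hs : 0 < √(t ^ 2 + b) := sqrt_pos.2 (by positivity)
  have hsqrt : HasDerivAt (fun u => √(u ^ 2 + b)) (t / √(t ^ 2 + b)) t := by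
    refine (((hasDerivAt_id' t).fun_pow 2).add_const b).sqrt (by positivity) |>.congr_deriv ?_
    norm_num
    field_simp
  have hden : HasDerivAt (fun u => a * u + √(u ^ 2 + b)) (a + t / √(t ^ 2 + b)) t := by
    simpa using ((hasDerivAt_id' t).const_mul a).fun_add hsqrt
  refine ((hasDerivAt_const t c).div hden ht).congr_deriv ?_
  field_simp
  ring

lemma tendsto_radicalBound_atTop (c : ℝ) (ha : 0 ≤ a) (hb : 0 ≤ b) :
    Tendsto (radicalBound c a b) atTop (𝓝 0) := by
  refine tendsto_const_nhds.div_atTop (tendsto_atTop_mono' _ ?_ tendsto_id)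
  filter_upwards [eventually_ge_atTop 0] with t ht
  have : t ≤ √(t ^ 2 + b) := le_sqrt_of_sq_le (by linarith)
  dsimp; nlinarith

lemma mul_radicalBound_sub_nonneg {c t : ℝ} (hc : 0 ≤ c) (ha : 0 ≤ a) (ht : 0 ≤ t) :
    0 ≤ t * radicalBound c a b t
      - -(c * (a * √(t ^ 2 + b) + t)) / (√(t ^ 2 + b) * (a * t + √(t ^ 2 + b)) ^ 2) := by
  rw [radicalBound, neg_div, sub_neg_eq_add]
  positivity

end RadicalBound

lemma mul_sqrt_sq_add_four_le (t : ℝ) : t * √(t ^ 2 + 4) ≤ t ^ 2 + 2 := by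
  have hs : √(t ^ 2 + 4) ^ 2 = t ^ 2 + 4 := sq_sqrt (by positivity)
  nlinarith [sq_nonneg (t - √(t ^ 2 + 4))]

lemma mul_sq_add_six_le_sqrt_mul (t : ℝ) : t * (t ^ 2 + 6) ≤ √(t ^ 2 + 8) * (t ^ 2 + 2) := by
  calc t * (t ^ 2 + 6) ≤ |t * (t ^ 2 + 6)| := le_abs_self _
    _ ≤ √((t ^ 2 + 8) * (t ^ 2 + 2) ^ 2) := abs_le_sqrt (by nlinarith)
    _ = √(t ^ 2 + 8) * (t ^ 2 + 2) := by
      rw [sqrt_mul (by positivity), sqrt_sq (by positivity)]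

lemma mul_radicalBound_sub_le_one {t : ℝ} (ht : 0 ≤ t) :
    t * radicalBound 2 1 4 t
      - -(2 * (1 * √(t ^ 2 + 4) + t)) / (√(t ^ 2 + 4) * (1 * t + √(t ^ 2 + 4)) ^ 2) ≤ 1 := by
  have hs : 0 < √(t ^ 2 + 4) := sqrt_pos.2 (by positivity)
  have hs2 : √(t ^ 2 + 4) ^ 2 = t ^ 2 + 4 := sq_sqrt (by positivity)
  have hkey := mul_sqrt_sq_add_four_le t
  rw [radicalBound, one_mul, one_mul, ← sub_nonneg]
  have hD : 0 < t + √(t ^ 2 + 4) := by positivity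
  field_simp
  nlinarith [mul_le_mul_of_nonneg_left hkey hD.le]

lemma one_le_mul_radicalBound_sub {t : ℝ} (ht : 0 ≤ t) :
    1 ≤ t * radicalBound 4 3 8 t
      - -(4 * (3 * √(t ^ 2 + 8) + t)) / (√(t ^ 2 + 8) * (3 * t + √(t ^ 2 + 8)) ^ 2) := by
  have hs : 0 < √(t ^ 2 + 8) := sqrt_pos.2 (by positivity)
  have hs2 : √(t ^ 2 + 8) ^ 2 = t ^ 2 + 8 := sq_sqrt (by positivity)
  have hkey := mul_sq_add_six_le_sqrt_mul t
  rw [radicalBound, ← sub_nonneg]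
  have hD : 0 < 3 * t + √(t ^ 2 + 8) := by positivity
  field_simp
  nlinarith [mul_le_mul_of_nonneg_left hkey hD.le]

theorem radicalBound_mul_gaussianPDFReal_le_integral_Ioi {z : ℝ} (hz : 0 ≤ z) :
    radicalBound 2 1 4 z * gaussianPDFReal 0 1 z ≤ ∫ t in Ioi z, gaussianPDFReal 0 1 t := by
  refine mul_gaussianPDFReal_le_integral_Ioi (fun t ht => hasDerivAt_radicalBound 2 four_pos ?_)
    (fun t ht => mul_radicalBound_sub_nonneg zero_le_two zero_le_one (hz.trans ht.out.le))
    (fun t ht => mul_radicalBound_sub_le_one (hz.trans ht.out.le))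
    (tendsto_radicalBound_atTop 2 zero_le_one zero_le_four)
  exact (add_sqrt_sq_add_pos zero_le_one four_pos (hz.trans ht)).ne'

theorem integral_Ioi_gaussianPDFReal_le_radicalBound_mul {z : ℝ} (hz : 0 ≤ z) :
    ∫ t in Ioi z, gaussianPDFReal 0 1 t ≤ radicalBound 4 3 8 z * gaussianPDFReal 0 1 z := by
  refine integral_Ioi_gaussianPDFReal_le_mul
    (fun t ht => hasDerivAt_radicalBound 4 (by norm_num) ?_)
    (fun t ht => one_le_mul_radicalBound_sub (hz.trans ht.out.le))
    (tendsto_radicalBound_atTop 4 zero_le_three (by norm_num))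
  exact (add_sqrt_sq_add_pos zero_le_three (by norm_num) (hz.trans ht)).ne'

lemma div_one_add_sq_le_radicalBound (z : ℝ) : z / (1 + z ^ 2) ≤ radicalBound 2 1 4 z := by
  have hD : 0 < z + √(z ^ 2 + 4) := by
    linarith [lt_sqrt_of_sq_lt (show (-z) ^ 2 < z ^ 2 + 4 by linarith [neg_sq z])]
  rw [radicalBound, one_mul, div_le_div_iff₀ (by positivity) hD]
  nlinarith [mul_sqrt_sq_add_four_le z]

/-- Mills' ratio inequalities: for `z ≥ 0`,
`z/(1+z²) ≤ 2/(z+√(z²+4)) ≤ (1-Φ(z))/φ(z) ≤ 4/(3z+√(z²+8))`. -/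
theorem mills_ratio_bounds (z : ℝ) (hz : 0 ≤ z)
    (φ : ℝ → ℝ) (hφ : ∀ t, φ t = (1 / Real.sqrt (2 * π)) * Real.exp (-t ^ 2 / 2))
    (Φ : ℝ → ℝ) (hΦ : ∀ t, Φ t = ∫ s in Set.Iic t, φ s) :
    z / (1 + z ^ 2) ≤ 2 / (z + Real.sqrt (z ^ 2 + 4))
    ∧ 2 / (z + Real.sqrt (z ^ 2 + 4)) ≤ (1 - Φ z) / φ z
    ∧ (1 - Φ z) / φ z ≤ 4 / (3 * z + Real.sqrt (z ^ 2 + 8)) := by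
  obtain rfl : φ = gaussianPDFReal 0 1 := funext fun t => by simp [hφ, gaussianPDFReal]
  have hpos : 0 < gaussianPDFReal 0 1 z := gaussianPDFReal_pos 0 1 z one_ne_zero
  have htail : 1 - Φ z = ∫ t in Ioi z, gaussianPDFReal 0 1 t := by
    rw [hΦ, integral_Ioi_gaussianPDFReal 0 one_ne_zero]
  have hbirnbaum : 2 / (z + √(z ^ 2 + 4)) = radicalBound 2 1 4 z := by
    rw [radicalBound, one_mul]
  rw [hbirnbaum, htail, le_div_iff₀ hpos, div_le_iff₀ hpos]
  exact ⟨div_one_add_sq_le_radicalBound z, radicalBound_mul_gaussianPDFReal_le_integral_Ioi hz,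
    integral_Ioi_gaussianPDFReal_le_radicalBound_mul hz⟩
end

section
/- Let τ, b, c > 0 with τ ≥ (4/3)·b·c. Then inf over x > 0 of [τx²/(1+bx) - cx] ≥ -c²/(4√τ·√(τ - cb)) ≥ -c²/(2τ). -/
/-- For `τ, b, c > 0` with `τ ≥ (4/3)bc`, the infimum over `x > 0` of
`τx²/(1+bx) - cx` is at least `-c²/(4√τ·√(τ - cb))`, which is itself at
least `-c²/(2τ)`. -/
theorem inf_rate_minus_linear (τ b c : ℝ) (hτ : 0 < τ) (hb : 0 < b) (hc : 0 < c)
    (h : τ ≥ (4 / 3) * b * c) :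
    (∀ x : ℝ, 0 < x →
      τ * x ^ 2 / (1 + b * x) - c * x ≥ -c ^ 2 / (4 * Real.sqrt τ * Real.sqrt (τ - c * b)))
    ∧ -c ^ 2 / (4 * Real.sqrt τ * Real.sqrt (τ - c * b)) ≥ -c ^ 2 / (2 * τ) := by
  have hA : 0 < τ - c * b := by nlinarith
  set s := Real.sqrt τ with hs
  set r := Real.sqrt (τ - c * b) with hr
  have hs0 : 0 < s := Real.sqrt_pos.mpr hτ
  have hr0 : 0 < r := Real.sqrt_pos.mpr hA
  have hs2 : s ^ 2 = τ := Real.sq_sqrt hτ.le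
  have hr2 : r ^ 2 = τ - c * b := Real.sq_sqrt hA.le
  have hrs : r ≤ s := Real.sqrt_le_sqrt (by nlinarith)
  have hs2r : s ≤ 2 * r := by nlinarith [hs2, hr2]
  have hcb : c * b = s ^ 2 - r ^ 2 := by rw [hs2]; linarith
  have hb' : b = (s ^ 2 - r ^ 2) / c := by
    field_simp
    linear_combination hcb
  constructor
  · intro x hx
    have h1 : 0 < 1 + b * x := by positivity
    have h2 : 0 < 4 * s * r := by positivity
    rw [ge_iff_le, ← sub_nonneg]
    have expand : τ * x ^ 2 / (1 + b * x) - c * x - (-c ^ 2 / (4 * s * r)) =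
        (4 * s * r * (τ * x ^ 2 - c * x * (1 + b * x)) + c ^ 2 * (1 + b * x)) /
          ((1 + b * x) * (4 * s * r)) := by
      field_simp
      ring
    rw [expand]
    apply div_nonneg _ (by positivity)
    have h6 : 0 ≤ 6 * s * r - s ^ 2 - r ^ 2 := by nlinarith
    have hK : 0 < 16 * s * r ^ 3 := by positivity
    have hE : 16 * s * r ^ 3 *
        (4 * s * r * (τ * x ^ 2 - c * x * (1 + b * x)) + c ^ 2 * (1 + b * x)) =
        (8 * s * r ^ 3 * x + c ^ 2 * b - 4 * s * r * c) ^ 2 +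
          c ^ 2 * (s - r) ^ 2 * (6 * s * r - s ^ 2 - r ^ 2) := by
      rw [← hs2, hb']
      field_simp
      ring
    nlinarith [hE, hK, sq_nonneg (8 * s * r ^ 3 * x + c ^ 2 * b - 4 * s * r * c),
      mul_nonneg (mul_nonneg (sq_nonneg c) (sq_nonneg (s - r))) h6]
  · rw [ge_iff_le, neg_div, neg_div, neg_le_neg_iff]
    have hle : 2 * τ ≤ 4 * s * r := by nlinarith
    gcongr
end

section
/- Let θ, θ⋆ ∈ ℝᵈ, let δ⋆ be the sparsity structure of θ⋆, and suppose Σ_{j:θ⋆ⱼ=0}|θⱼ - θ⋆ⱼ| > 7·Σ_{j:θ⋆ⱼ≠0}|θⱼ - θ⋆ⱼ| (i.e. θ - θ⋆ is outside the cone 𝒩). Then B(θ) := (ρ/2)‖θ-θ⋆‖₁ + ρ(‖θ⋆‖₁ - ‖θ‖₁) ≤ -(ρ/4)‖θ-θ⋆‖₁ for every ρ ≥ 0. -/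
/-! Write `S` and `Sᶜ` for the ℓ¹ mass of `θ - θ⋆` on and off the support of `θ⋆`. Off the
support `|θ⋆ⱼ| - |θⱼ| = -|θⱼ - θ⋆ⱼ|`, on it the triangle inequality bounds it by `|θⱼ - θ⋆ⱼ|`, so
`‖θ⋆‖₁ - ‖θ‖₁ ≤ S - Sᶜ`. Hence `B(θ) + (ρ/4)‖θ - θ⋆‖₁ ≤ ρ (7 S - Sᶜ) / 4 ≤ 0`. -/

open Finset

theorem sum_abs_sub_sum_abs_le_sum_filter_ne_sub_sum_filter_eq {ι : Type*} (s : Finset ι)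
    (θ θs : ι → ℝ) :
    ∑ j ∈ s, |θs j| - ∑ j ∈ s, |θ j|
      ≤ ∑ j ∈ s.filter (fun j => θs j ≠ 0), |θ j - θs j|
        - ∑ j ∈ s.filter (fun j => θs j = 0), |θ j - θs j| := by
  rw [← sum_sub_distrib, ← sum_filter_add_sum_filter_not s (fun j => θs j = 0),
    sub_eq_neg_add, ← sum_neg_distrib]
  gcongr with j hj j _
  · rw [(mem_filter.mp hj).2]
    simp
  · rw [abs_sub_comm (θ j)]
    exact abs_sub_abs_le_abs_sub _ _

/-- If `θ - θ⋆` lies outside the cone `𝒩` (off-support ℓ¹ mass exceeds 7 times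
the on-support ℓ¹ mass), then
`B(θ) = (ρ/2)‖θ-θ⋆‖₁ + ρ(‖θ⋆‖₁ - ‖θ‖₁) ≤ -(ρ/4)‖θ-θ⋆‖₁` for every `ρ ≥ 0`. -/
theorem B_bound_outside_cone (d : ℕ) (θ θs : Fin d → ℝ) (ρ : ℝ) (hρ : 0 ≤ ρ)
    (hout : (∑ j ∈ univ.filter (fun j => θs j = 0), |θ j - θs j|)
      > 7 * ∑ j ∈ univ.filter (fun j => θs j ≠ 0), |θ j - θs j|) :
    (ρ / 2) * (∑ j, |θ j - θs j|) + ρ * ((∑ j, |θs j|) - ∑ j, |θ j|)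
      ≤ -(ρ / 4) * ∑ j, |θ j - θs j| := by
  set off := ∑ j ∈ univ.filter (fun j => θs j = 0), |θ j - θs j|
  set on := ∑ j ∈ univ.filter (fun j => θs j ≠ 0), |θ j - θs j|
  have hsplit : ∑ j, |θ j - θs j| = off + on := (sum_filter_add_sum_filter_not _ _ _).symm
  have hdiff := mul_le_mul_of_nonneg_left
    (sum_abs_sub_sum_abs_le_sum_filter_ne_sub_sum_filter_eq univ θ θs) hρ
  have hgap : 0 ≤ ρ * (off - 7 * on) := mul_nonneg hρ (by linarith)
  rw [hsplit]
  linarith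
end
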